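/- arXiv:2004.11631 — 4 statements merged into one kernel-verified Lean document; each statement's English description precedes it below -/
import Mathlib

section
/- Let X be a real Banach space, let G be a compact topological group acting separately continuously on X by continuous linear operators via a homomorphism ρ, and let K ⊆ X be a G-invariant set. If z ∈ X \ K can be separated from K by a continuous polynomial Q (that is, sup_{w∈K}|Q(w)| < |Q(z)|), then there exists a G-invariant continuous polynomial P on X that separates z from K. Furthermore, if Q is homogeneous, then P can be chosen to be homogeneous. -/
/-- A continuous polynomial on a normed space `X` over `𝕜`: a function of the form
`P x = a₀ + ∑_{k=1}^{N} A_k (x, …, x)` where each `A_k` is a continuous `k`-linear map. -/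
def IsContinuousPolynomial (𝕜 : Type*) [NontriviallyNormedField 𝕜] {X : Type*}
    [NormedAddCommGroup X] [NormedSpace 𝕜 X] (P : X → 𝕜) : Prop :=
  ∃ (N : ℕ) (a₀ : 𝕜)
    (A : (k : Fin N) → ContinuousMultilinearMap 𝕜 (fun _ : Fin (k.1 + 1) => X) 𝕜),
    ∀ x, P x = a₀ + ∑ k, A k (fun _ => x)

/-- An `m`-homogeneous continuous polynomial: `P x = A (x, …, x)` for a single continuous
`m`-linear map `A`. -/
def IsHomogeneousPolynomial (𝕜 : Type*) [NontriviallyNormedField 𝕜] {X : Type*}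
    [NormedAddCommGroup X] [NormedSpace 𝕜 X] (m : ℕ) (P : X → 𝕜) : Prop :=
  ∃ A : ContinuousMultilinearMap 𝕜 (fun _ : Fin m => X) 𝕜, ∀ x, P x = A (fun _ => x)

/-!
Replacing `Q` by `Q ^ 2` makes the separating polynomial nonnegative, with `Q² z > c² ≥ Q²` on
`K`. Average `(Q ^ 2) ^ n` over the orbit against a right-invariant Haar measure `μ` of `G`: the result
`P x = ∫ (Q ^ 2) ^ n (ρ g x) dμ` is `G`-invariant, and it is again a (homogeneous) continuous
polynomial because averaging a continuous multilinear map along a strongly continuous family of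
operators gives a continuous multilinear map (the family is uniformly bounded by Banach–Steinhaus,
`G` being compact). On `K` we have `P ≤ c²ⁿ μ(G)`, while `P z ≥ δⁿ μ(U)` for the open neighbourhood
`U = {g | Q² (ρ g z) > δ}` of `1`, where `c² < δ`; for `n` large the second bound wins.
-/

open MeasureTheory Filter Set

section Polynomials

variable {𝕜 : Type*} [NontriviallyNormedField 𝕜] {X : Type*} [NormedAddCommGroup X]
  [NormedSpace 𝕜 X]

variable (𝕜 X) in
def homogeneousPolynomials (m : ℕ) : Submodule 𝕜 (X → 𝕜) where
  carrier := {P | IsHomogeneousPolynomial 𝕜 m P}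
  add_mem' := by
    rintro P Q ⟨A, hA⟩ ⟨B, hB⟩
    exact ⟨A + B, fun x => by simp [hA, hB]⟩
  zero_mem' := ⟨0, fun _ => rfl⟩
  smul_mem' := by
    rintro c P ⟨A, hA⟩
    exact ⟨c • A, fun x => by simp [hA]⟩

theorem mem_homogeneousPolynomials {m : ℕ} {P : X → 𝕜} :
    P ∈ homogeneousPolynomials 𝕜 X m ↔ IsHomogeneousPolynomial 𝕜 m P :=
  Iff.rfl

instance : SetLike.GradedMonoid (homogeneousPolynomials 𝕜 X) where
  one_mem := ⟨ContinuousMultilinearMap.constOfIsEmpty 𝕜 _ 1, fun _ => rfl⟩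
  mul_mem := by
    rintro a b P Q ⟨A, hA⟩ ⟨B, hB⟩
    exact ⟨(A.smulRight B).uncurrySum.domDomCongr finSumFinEquiv,
      fun x => by simp [hA, hB, Function.comp_def]⟩

theorem IsHomogeneousPolynomial.apply_eq_apply_zero {P : X → 𝕜}
    (hP : IsHomogeneousPolynomial 𝕜 0 P) (x : X) : P x = P 0 := by
  obtain ⟨A, hA⟩ := hP
  rw [hA, hA, Subsingleton.elim (fun _ : Fin 0 => x) fun _ => 0]

theorem IsHomogeneousPolynomial.continuous {m : ℕ} {P : X → 𝕜}
    (hP : IsHomogeneousPolynomial 𝕜 m P) : Continuous P := by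
  obtain ⟨A, hA⟩ := hP
  rw [funext hA]
  exact A.cont.comp (continuous_pi fun _ => continuous_id)

theorem isContinuousPolynomial_iff_mem_iSup {P : X → 𝕜} :
    IsContinuousPolynomial 𝕜 P ↔ P ∈ ⨆ m, homogeneousPolynomials 𝕜 X m := by
  constructor
  · rintro ⟨N, a₀, A, hP⟩
    have hsum : P = (fun _ => a₀) + ∑ k : Fin N, fun x => A k fun _ => x :=
      funext fun x => by simp [hP]
    rw [hsum]
    refine add_mem (Submodule.mem_iSup_of_mem 0 ⟨.constOfIsEmpty 𝕜 _ a₀, fun _ => rfl⟩)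
      (sum_mem fun k _ => Submodule.mem_iSup_of_mem (k.1 + 1) ⟨A k, fun _ => rfl⟩)
  · rw [Submodule.mem_iSup_iff_exists_finsupp]
    rintro ⟨f, hf, rfl⟩
    choose A hA using hf
    obtain ⟨N, hN⟩ : ∃ N, f.support ⊆ Finset.range (N + 1) :=
      ⟨f.support.sup id, fun k hk => Finset.mem_range_succ_iff.2 (Finset.le_sup (f := id) hk)⟩
    refine ⟨N, f 0 0, fun k => A (k.1 + 1), fun x => ?_⟩
    have hf₀ : IsHomogeneousPolynomial 𝕜 0 (f 0) := ⟨A 0, hA 0⟩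
    rw [Finsupp.sum_of_support_subset f hN _ fun _ _ => rfl, Finset.sum_apply,
      Finset.sum_range_succ', add_comm, hf₀.apply_eq_apply_zero x,
      Fin.sum_univ_eq_sum_range (fun k => A (k + 1) fun _ => x)]
    simp [hA]

theorem continuous_of_mem_iSup_homogeneousPolynomials {P : X → 𝕜}
    (hP : P ∈ ⨆ m, homogeneousPolynomials 𝕜 X m) : Continuous P := by
  refine Submodule.iSup_induction _ (motive := Continuous) hP (fun _ _ hP => ?_) continuous_const
    fun _ _ => .add
  exact IsHomogeneousPolynomial.continuous hP

theorem pow_mem_iSup_homogeneousPolynomials {P : X → 𝕜}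
    (hP : P ∈ ⨆ m, homogeneousPolynomials 𝕜 X m) (n : ℕ) :
    P ^ n ∈ ⨆ m, homogeneousPolynomials 𝕜 X m := by
  rw [Submodule.iSup_eq_toSubmodule_range, Subalgebra.mem_toSubmodule] at hP ⊢
  exact pow_mem hP n

end Polynomials

theorem exists_forall_norm_le_of_continuous_apply {G : Type*} [TopologicalSpace G]
    [CompactSpace G] {𝕜 E F : Type*} [NontriviallyNormedField 𝕜] [NormedAddCommGroup E]
    [NormedSpace 𝕜 E] [CompleteSpace E] [NormedAddCommGroup F] [NormedSpace 𝕜 F]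
    {T : G → E →L[𝕜] F} (hT : ∀ x, Continuous fun g => T g x) : ∃ M, ∀ g, ‖T g‖ ≤ M :=
  banach_steinhaus fun x =>
    have ⟨C, hC⟩ := (isCompact_range (hT x).norm).bddAbove
    ⟨C, fun g => hC (mem_range_self g)⟩

section Averaging

variable {G : Type*} [TopologicalSpace G] [CompactSpace G] [MeasurableSpace G]
  [OpensMeasurableSpace G] (μ : Measure G) [IsFiniteMeasure μ]
  {X : Type*} [NormedAddCommGroup X] [NormedSpace ℝ X] [CompleteSpace X]
  {T : G → X →L[ℝ] X}

theorem ContinuousMultilinearMap.exists_apply_eq_integral_compContinuousLinearMap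
    {ι F : Type*} [Fintype ι] [NormedAddCommGroup F] [NormedSpace ℝ F]
    (A : ContinuousMultilinearMap ℝ (fun _ : ι => X) F) (hT : ∀ x, Continuous fun g => T g x) :
    ∃ B : ContinuousMultilinearMap ℝ (fun _ : ι => X) F,
      ∀ v, B v = ∫ g, A.compContinuousLinearMap (fun _ => T g) v ∂μ := by
  obtain ⟨M, hM⟩ := exists_forall_norm_le_of_continuous_apply hT
  have hint (v : ι → X) : Integrable (fun g => A.compContinuousLinearMap (fun _ => T g) v) μ :=
    (A.cont.comp (continuous_pi fun i => hT (v i))).integrable_of_hasCompactSupport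
      (.of_compactSpace _)
  let B : MultilinearMap ℝ (fun _ : ι => X) F :=
    { toFun v := ∫ g, A.compContinuousLinearMap (fun _ => T g) v ∂μ
      map_update_add' v i x y := by
        simp only [ContinuousMultilinearMap.map_update_add]
        exact integral_add (hint _) (hint _)
      map_update_smul' v i c x := by
        simp only [ContinuousMultilinearMap.map_update_smul]
        exact integral_smul c _ }
  refine ⟨B.mkContinuous (‖A‖ * M ^ Fintype.card ι * μ.real univ) fun v => ?_, fun v => rfl⟩
  have hpoint (g : G) :
      ‖A.compContinuousLinearMap (fun _ => T g) v‖ ≤ ‖A‖ * M ^ Fintype.card ι * ∏ i, ‖v i‖ := by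
    have hM₀ : 0 ≤ M := (norm_nonneg _).trans (hM g)
    calc _ ≤ ‖A.compContinuousLinearMap (fun _ => T g)‖ * ∏ i, ‖v i‖ :=
          (A.compContinuousLinearMap _).le_opNorm v
      _ ≤ ‖A‖ * (∏ _ : ι, ‖T g‖) * ∏ i, ‖v i‖ := by
        gcongr; exact norm_compContinuousLinearMap_le A _
      _ ≤ ‖A‖ * M ^ Fintype.card ι * ∏ i, ‖v i‖ := by
        rw [Finset.prod_const, Finset.card_univ]
        gcongr
        exact hM g
  calc ‖B v‖ ≤ (‖A‖ * M ^ Fintype.card ι * ∏ i, ‖v i‖) * μ.real univ :=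
        norm_integral_le_of_norm_le_const (ae_of_all _ hpoint)
    _ = _ := by ring

theorem IsHomogeneousPolynomial.integral_comp {m : ℕ} {P : X → ℝ}
    (hP : IsHomogeneousPolynomial ℝ m P) (hT : ∀ x, Continuous fun g => T g x) :
    IsHomogeneousPolynomial ℝ m fun x => ∫ g, P (T g x) ∂μ := by
  obtain ⟨A, hA⟩ := hP
  obtain ⟨B, hB⟩ := A.exists_apply_eq_integral_compContinuousLinearMap μ hT
  exact ⟨B, fun x => by simp [hA, hB]⟩

theorem integral_comp_mem_iSup_homogeneousPolynomials {P : X → ℝ}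
    (hP : P ∈ ⨆ m, homogeneousPolynomials ℝ X m) (hT : ∀ x, Continuous fun g => T g x) :
    (fun x => ∫ g, P (T g x) ∂μ) ∈ ⨆ m, homogeneousPolynomials ℝ X m := by
  induction hP using Submodule.iSup_induction' with
  | mem m P hP => exact Submodule.mem_iSup_of_mem m (IsHomogeneousPolynomial.integral_comp μ hP hT)
  | zero =>
    simp only [Pi.zero_apply, integral_zero]
    exact zero_mem _
  | add P Q hP hQ hPavg hQavg =>
    have hint {R : X → ℝ} (hR : R ∈ ⨆ m, homogeneousPolynomials ℝ X m) (x : X) :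
        Integrable (fun g => R (T g x)) μ :=
      ((continuous_of_mem_iSup_homogeneousPolynomials hR).comp
        (hT x)).integrable_of_hasCompactSupport (.of_compactSpace _)
    have hsplit : (fun x => ∫ g, (P + Q) (T g x) ∂μ) =
        (fun x => ∫ g, P (T g x) ∂μ) + fun x => ∫ g, Q (T g x) ∂μ :=
      funext fun x => integral_add (hint hP x) (hint hQ x)
    rw [hsplit]
    exact add_mem hPavg hQavg

end Averaging

theorem exists_pow_mul_measureReal_lt_integral_pow {G : Type*} [TopologicalSpace G]
    [CompactSpace G] [MeasurableSpace G] [OpensMeasurableSpace G] (μ : Measure G)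
    [IsFiniteMeasure μ] [μ.IsOpenPosMeasure] {f : G → ℝ} (hf : Continuous f) (hf₀ : 0 ≤ f)
    {c : ℝ} (hc : 0 ≤ c) {g₀ : G} (hcg₀ : c < f g₀) :
    ∃ n : ℕ, c ^ n * μ.real univ < ∫ g, f g ^ n ∂μ := by
  obtain ⟨δ, hcδ, hδg₀⟩ := exists_between hcg₀
  have hδ : 0 < δ := hc.trans_lt hcδ
  set U := {g | δ < f g}
  have hU : IsOpen U := isOpen_lt continuous_const hf
  have hμU : 0 < μ.real U :=
    ENNReal.toReal_pos (hU.measure_pos μ ⟨g₀, hδg₀⟩).ne' (measure_ne_top μ U)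
  have hμUG : μ.real U ≤ μ.real univ := measureReal_mono (subset_univ U)
  have hsmall : ∀ᶠ n : ℕ in atTop, (c / δ) ^ n < μ.real U / μ.real univ :=
    (tendsto_pow_atTop_nhds_zero_of_lt_one (div_nonneg hc hδ.le) ((div_lt_one hδ).2 hcδ)).eventually
      (gt_mem_nhds (div_pos hμU (hμU.trans_le hμUG)))
  obtain ⟨n, hn⟩ := hsmall.exists
  refine ⟨n, ?_⟩
  have hint : Integrable (fun g => f g ^ n) μ :=
    (hf.pow n).integrable_of_hasCompactSupport (.of_compactSpace _)
  calc c ^ n * μ.real univ = (c / δ) ^ n * μ.real univ * δ ^ n := by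
        rw [div_pow]; field_simp
    _ < μ.real U * δ ^ n := by
        gcongr
        exact (lt_div_iff₀ (hμU.trans_le hμUG)).1 hn
    _ ≤ ∫ g in U, f g ^ n ∂μ :=
        setIntegral_ge_of_const_le hU.measurableSet (measure_ne_top μ U)
          (fun g hg => pow_le_pow_left₀ hδ.le (le_of_lt hg) n) hint.integrableOn
    _ ≤ ∫ g, f g ^ n ∂μ := setIntegral_le_integral hint (ae_of_all _ fun g => pow_nonneg (hf₀ g) n)

theorem exists_lt_norm_integral_pow_of_le_of_lt {G : Type*} [TopologicalSpace G]
    [CompactSpace G] [MeasurableSpace G] [OpensMeasurableSpace G] (μ : Measure G)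
    [IsFiniteMeasure μ] [μ.IsOpenPosMeasure] {X : Type*} [TopologicalSpace X] {T : G → X → X}
    (hT : ∀ x, Continuous fun g => T g x) (K : Set X) (hK : ∀ g, ∀ x ∈ K, T g x ∈ K)
    {R : X → ℝ} (hR : Continuous R) (hR₀ : 0 ≤ R) {c : ℝ} (hc : 0 ≤ c)
    (hcK : ∀ w ∈ K, R w ≤ c) {z : X} {g₀ : G} (hcz : c < R (T g₀ z)) :
    ∃ n : ℕ, ∃ C, C < ‖∫ g, R (T g z) ^ n ∂μ‖ ∧ ∀ w ∈ K, ‖∫ g, R (T g w) ^ n ∂μ‖ ≤ C := by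
  obtain ⟨n, hn⟩ :=
    exists_pow_mul_measureReal_lt_integral_pow μ (hR.comp (hT z)) (fun _ => hR₀ _) hc hcz
  refine ⟨n, c ^ n * μ.real univ, hn.trans_le (Real.le_norm_self _), fun w hw =>
    norm_integral_le_of_norm_le_const (ae_of_all _ fun g => ?_)⟩
  rw [norm_pow, Real.norm_of_nonneg (hR₀ _)]
  exact pow_le_pow_left₀ (hR₀ _) (hcK _ (hK g w hw)) n

theorem integral_comp_apply_mul_eq {G : Type*} [Group G] [MeasurableSpace G] [MeasurableMul G]
    (μ : Measure G) [μ.IsMulRightInvariant] {𝕜 X E : Type*} [NontriviallyNormedField 𝕜]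
    [NormedAddCommGroup X] [NormedSpace 𝕜 X] [NormedAddCommGroup E] [NormedSpace ℝ E]
    (ρ : G →* (X ≃L[𝕜] X)) (F : X → E) (h : G) (x : X) :
    ∫ g, F (ρ g (ρ h x)) ∂μ = ∫ g, F (ρ g x) ∂μ := by
  have hmul (g : G) : ρ g (ρ h x) = ρ (g * h) x := by rw [map_mul]; rfl
  simp_rw [hmul]
  exact integral_mul_right_eq_self (fun g => F (ρ g x)) h

theorem statement0_general {X : Type*} [NormedAddCommGroup X] [NormedSpace ℝ X] [CompleteSpace X]
    {G : Type*} [Group G] [TopologicalSpace G] [IsTopologicalGroup G] [CompactSpace G]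
    (ρ : G →* (X ≃L[ℝ] X)) (hρ : ∀ x : X, Continuous fun g : G => (ρ g) x)
    (K : Set X) (hK : ∀ (g : G), ∀ x ∈ K, (ρ g) x ∈ K)
    (z : X)
    (Q : X → ℝ) (hQ : IsContinuousPolynomial ℝ Q)
    (hsep : ∃ c, c < ‖Q z‖ ∧ ∀ w ∈ K, ‖Q w‖ ≤ c) :
    (∃ P : X → ℝ, IsContinuousPolynomial ℝ P ∧
      (∀ (g : G) (x : X), P ((ρ g) x) = P x) ∧
      ∃ c, c < ‖P z‖ ∧ ∀ w ∈ K, ‖P w‖ ≤ c) ∧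
    ∀ m : ℕ, IsHomogeneousPolynomial ℝ m Q →
      ∃ (m' : ℕ) (P : X → ℝ), IsHomogeneousPolynomial ℝ m' P ∧
        (∀ (g : G) (x : X), P ((ρ g) x) = P x) ∧
        ∃ c, c < ‖P z‖ ∧ ∀ w ∈ K, ‖P w‖ ≤ c := by
  rcases K.eq_empty_or_nonempty with rfl | ⟨w₀, hw₀⟩
  · have hone : IsHomogeneousPolynomial ℝ 0 fun _ : X => (1 : ℝ) :=
      (SetLike.GradedOne.one_mem : (1 : X → ℝ) ∈ homogeneousPolynomials ℝ X 0)
    exact ⟨⟨_, isContinuousPolynomial_iff_mem_iSup.2 (Submodule.mem_iSup_of_mem 0 hone),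
      fun _ _ => rfl, 0, by simp, by simp⟩,
      fun _ _ => ⟨0, _, hone, fun _ _ => rfl, 0, by simp, by simp⟩⟩
  obtain ⟨c, hcz, hcK⟩ := hsep
  have hc : 0 ≤ c := (norm_nonneg _).trans (hcK w₀ hw₀)
  rw [isContinuousPolynomial_iff_mem_iSup] at hQ
  have hQ₂ := pow_mem_iSup_homogeneousPolynomials hQ 2
  have hQ₂K (w : X) (hw : w ∈ K) : (Q ^ 2) w ≤ c ^ 2 := by
    simpa using pow_le_pow_left₀ (norm_nonneg _) (hcK w hw) 2
  have hQ₂z : c ^ 2 < (Q ^ 2) (ρ 1 z) := by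
    rw [map_one]
    exact (by simpa using pow_lt_pow_left₀ hcz hc two_ne_zero : c ^ 2 < Q z ^ 2)
  borelize G
  let μ := (Measure.haar : Measure G).inv
  obtain ⟨n, hPsep⟩ := exists_lt_norm_integral_pow_of_le_of_lt μ hρ K hK
    (continuous_of_mem_iSup_homogeneousPolynomials hQ₂) (fun _ => sq_nonneg _) (sq_nonneg c)
    hQ₂K hQ₂z
  let P : X → ℝ := fun x => ∫ g, ((Q ^ 2) ^ n) (ρ g x) ∂μ
  have hT : ∀ x, Continuous fun g => (ρ g : X →L[ℝ] X) x := hρ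
  have hPinv : ∀ g x, P (ρ g x) = P x := integral_comp_apply_mul_eq μ ρ _
  exact ⟨⟨P, isContinuousPolynomial_iff_mem_iSup.2
      (integral_comp_mem_iSup_homogeneousPolynomials μ
        (pow_mem_iSup_homogeneousPolynomials hQ₂ n) hT), hPinv, hPsep⟩,
    fun m hm => ⟨_, P, (SetLike.pow_mem_graded n (SetLike.pow_mem_graded 2
      (mem_homogeneousPolynomials.2 hm))).integral_comp μ hT, hPinv, hPsep⟩⟩

/-- Let `X` be a real Banach space, `G` a compact topological group acting
separately continuously on `X` by invertible continuous linear operators via `ρ`, and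
`K ⊆ X` a `G`-invariant set. If `z ∉ K` can be separated from `K` by a continuous polynomial
`Q`, then there is a `G`-invariant continuous polynomial `P` separating `z` from `K`;
moreover, if `Q` is homogeneous then `P` can be chosen homogeneous. -/
theorem statement0 {X : Type*} [NormedAddCommGroup X] [NormedSpace ℝ X] [CompleteSpace X]
    {G : Type*} [Group G] [TopologicalSpace G] [IsTopologicalGroup G] [CompactSpace G]
    (ρ : G →* (X ≃L[ℝ] X)) (hρ : ∀ x : X, Continuous fun g : G => (ρ g) x)
    (K : Set X) (hK : ∀ (g : G), ∀ x ∈ K, (ρ g) x ∈ K)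
    (z : X) (hz : z ∉ K)
    (Q : X → ℝ) (hQ : IsContinuousPolynomial ℝ Q)
    (hsep : ∃ c, c < ‖Q z‖ ∧ ∀ w ∈ K, ‖Q w‖ ≤ c) :
    (∃ P : X → ℝ, IsContinuousPolynomial ℝ P ∧
      (∀ (g : G) (x : X), P ((ρ g) x) = P x) ∧
      ∃ c, c < ‖P z‖ ∧ ∀ w ∈ K, ‖P w‖ ≤ c) ∧
    ∀ m : ℕ, IsHomogeneousPolynomial ℝ m Q →
      ∃ (m' : ℕ) (P : X → ℝ), IsHomogeneousPolynomial ℝ m' P ∧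
        (∀ (g : G) (x : X), P ((ρ g) x) = P x) ∧
        ∃ c, c < ‖P z‖ ∧ ∀ w ∈ K, ‖P w‖ ≤ c :=
  statement0_general ρ hρ K hK z Q hQ hsep
end

section
/- For every natural number N > 1 and every natural number k ≥ 1, let n = 2k+1 and let X = ℝⁿ equipped with the norm ‖x‖ = (∑_{i=1}^n |x_i|^{2N})^{1/(2N)}. There exist a set K ⊆ X (namely the closed unit ball of X), a point z ∈ X \ K, and a continuous polynomial Q : ℝⁿ → ℝ such that: (i) Q separates z from K, i.e. sup_{w∈K}|Q(w)| < |Q(z)|; (ii) for every l with 1 ≤ l ≤ N−1, the l-th symmetrization P_l does not separate z from K, i.e. sup_{w∈K}|P_l(w)| ≥ |P_l(z)|; and (iii) P_N separates z from K. Here P_l(x) = (1/n!) ∑_{σ ∈ Sym(n)} Q(x_{σ(1)}, …, x_{σ(n)})^l denotes the l-th symmetrization of Q with respect to the permutation group Sym(n). -/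
/-! Take `Q = X 0` and `z = t • e₀`. Every symmetrization of a coordinate is a power mean,
`P_l(x) = (∑ j, x j ^ l) / n`, so `P_l(z) = t ^ l / n`. The diagonal point of the unit ball with
all coordinates `n ^ (-1/(2N))` has `P_l = n ^ (-l/(2N))`, which is at least `t ^ l / n` for all
`l ≤ N - 1` as soon as `t ≤ n ^ (1/(N-1) - 1/(2N))`; on the other hand Cauchy–Schwarz bounds
`|P_N|` on the ball by `n ^ (-1/2)`, which is less than `t ^ N / n` once `t > n ^ (1/(2N))`.
Writing `n = r ^ (2N(N-1))`, the choice `t = r ^ (N+1)` lies in this window, and all comparisons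
become comparisons between natural powers of `r > 1`. -/

/-- The closed unit ball of `ℝⁿ` for the `ℓ^{2N}` norm, described by
`∑ i |x i|^(2N) ≤ 1`. -/
def unitBall2N (n N : ℕ) : Set (Fin n → ℝ) :=
  {x | ∑ i, |x i| ^ (2 * N) ≤ 1}

/-- The `l`-th symmetrization of a polynomial `Q` on `ℝⁿ` with respect to the permutation
group `Sym(n)`: `P_l(x) = (1/n!) ∑_{σ ∈ Sym(n)} Q(x_{σ(1)}, …, x_{σ(n)})^l`. -/
noncomputable def symmetrization (n : ℕ) (Q : MvPolynomial (Fin n) ℝ) (l : ℕ)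
    (x : Fin n → ℝ) : ℝ :=
  (1 / (n.factorial : ℝ)) * ∑ σ : Equiv.Perm (Fin n),
    (MvPolynomial.eval (fun i => x (σ i)) Q) ^ l

open MvPolynomial Equiv

theorem card_nsmul_sum_perm_apply {α M : Type*} [Fintype α] [DecidableEq α] [AddCommMonoid M]
    (f : α → M) (i : α) :
    Fintype.card α • ∑ σ : Perm α, f (σ i) = (Fintype.card α).factorial • ∑ j, f j := by
  have sum_eq (j : α) : ∑ σ : Perm α, f (σ i) = ∑ σ : Perm α, f (σ j) := by
    rw [← Equiv.sum_comp (Equiv.mulRight (swap i j)) fun σ => f (σ j)]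
    simp
  calc Fintype.card α • ∑ σ : Perm α, f (σ i) = ∑ j : α, ∑ σ : Perm α, f (σ j) := by
        rw [← Finset.sum_congr rfl fun j _ => sum_eq j, Finset.sum_const, Finset.card_univ]
    _ = ∑ σ : Perm α, ∑ j, f (σ j) := Finset.sum_comm
    _ = ∑ _σ : Perm α, ∑ j, f j := Finset.sum_congr rfl fun σ _ => Equiv.sum_comp σ f
    _ = (Fintype.card α).factorial • ∑ j, f j := by
        rw [Finset.sum_const, Finset.card_univ, Fintype.card_perm]

theorem symmetrization_X {n : ℕ} (i : Fin n) (l : ℕ) (x : Fin n → ℝ) :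
    symmetrization n (X i) l x = (∑ j, x j ^ l) / n := by
  have hcount := card_nsmul_sum_perm_apply (fun j => x j ^ l) i
  simp only [Fintype.card_fin, nsmul_eq_mul] at hcount
  have hn : (n : ℝ) ≠ 0 := Nat.cast_ne_zero.2 (Fin.pos i).ne'
  have hfac : (n.factorial : ℝ) ≠ 0 := Nat.cast_ne_zero.2 n.factorial_ne_zero
  simp only [symmetrization, eval_X]
  field_simp
  linarith

def Separates {α : Type*} (f : α → ℝ) (K : Set α) (z : α) : Prop :=
  ∃ c, c < |f z| ∧ ∀ w ∈ K, |f w| ≤ c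

theorem not_separates_of_le {α : Type*} {f : α → ℝ} {K : Set α} {z w : α} (hw : w ∈ K)
    (h : |f z| ≤ |f w|) : ¬ Separates f K z :=
  fun ⟨_, hc, hK⟩ => (hc.trans_le (h.trans (hK w hw))).false

theorem exists_one_lt_pow_eq {a : ℝ} (ha : 1 < a) {m : ℕ} (hm : m ≠ 0) :
    ∃ r : ℝ, 1 < r ∧ a = r ^ m :=
  ⟨a ^ (m⁻¹ : ℝ), Real.one_lt_rpow ha (by positivity),
    (Real.rpow_inv_natCast_pow (by linarith) hm).symm⟩

section
variable {n N : ℕ}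

theorem abs_le_one_of_mem_unitBall2N (hN : N ≠ 0) {w : Fin n → ℝ} (hw : w ∈ unitBall2N n N)
    (i : Fin n) : |w i| ≤ 1 := by
  refine (pow_le_one_iff_of_nonneg (abs_nonneg _) (by omega : 2 * N ≠ 0)).1 ?_
  exact (Finset.single_le_sum (f := fun j => |w j| ^ (2 * N)) (fun j _ => by positivity)
    (Finset.mem_univ i)).trans hw

theorem abs_sum_pow_le_sqrt_of_mem_unitBall2N {w : Fin n → ℝ} (hw : w ∈ unitBall2N n N) :
    |∑ j, w j ^ N| ≤ √n := by
  refine Real.abs_le_sqrt ?_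
  calc (∑ j, w j ^ N) ^ 2 ≤ n * ∑ j, (w j ^ N) ^ 2 := by
        simpa using sq_sum_le_card_mul_sum_sq (s := Finset.univ) (f := fun j => w j ^ N)
    _ = n * ∑ j, |w j| ^ (2 * N) := by
        simp only [(even_two_mul N).pow_abs, ← pow_mul, mul_comm N 2]
    _ ≤ n := mul_le_of_le_one_right (Nat.cast_nonneg n) hw

theorem const_mem_unitBall2N {r : ℝ} (hr : 0 < r) (hn : (n : ℝ) = r ^ (2 * N * (N - 1))) :
    (fun _ => (r ^ (N - 1))⁻¹) ∈ unitBall2N n N := by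
  simp only [unitBall2N, Set.mem_ofPred_eq, Finset.sum_const, Finset.card_univ, Fintype.card_fin,
    nsmul_eq_mul, hn, abs_inv, abs_pow, abs_of_pos hr, inv_pow, ← pow_mul]
  rw [mul_comm (N - 1), mul_comm 2 N, mul_assoc, mul_inv_cancel₀ (by positivity)]

variable (i : Fin n)

theorem single_notMem_unitBall2N {t : ℝ} (ht : 1 < t) (hN : N ≠ 0) :
    Pi.single i t ∉ unitBall2N n N := by
  simp only [unitBall2N, Set.mem_ofPred_eq, not_le]
  rw [Finset.sum_eq_single i (fun j _ hj => by simp [hj, hN]) (by simp), Pi.single_eq_same,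
    abs_of_pos (by linarith)]
  exact one_lt_pow₀ ht (by omega)

theorem symmetrization_X_single (t : ℝ) {l : ℕ} (hl : l ≠ 0) :
    symmetrization n (X i) l (Pi.single i t) = t ^ l / n := by
  rw [symmetrization_X, Finset.sum_eq_single i (fun j _ hj => by simp [hj, hl]) (by simp),
    Pi.single_eq_same]

theorem symmetrization_X_const (s : ℝ) (l : ℕ) :
    symmetrization n (X i) l (fun _ => s) = s ^ l := by
  have hn : (n : ℝ) ≠ 0 := Nat.cast_ne_zero.2 (Fin.pos i).ne'
  rw [symmetrization_X, Finset.sum_const, Finset.card_univ, Fintype.card_fin, nsmul_eq_mul,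
    mul_div_cancel_left₀ _ hn]

theorem separates_X (hN : N ≠ 0) {t : ℝ} (ht : 1 < t) :
    Separates (fun w => eval w (X i)) (unitBall2N n N) (Pi.single i t) :=
  ⟨1, by simpa [abs_of_pos (by linarith : 0 < t)],
    fun w hw => by simpa using abs_le_one_of_mem_unitBall2N hN hw i⟩

variable {r : ℝ} (hr : 1 < r) (hn : (n : ℝ) = r ^ (2 * N * (N - 1)))
include hr hn

theorem not_separates_symmetrization_X {l : ℕ} (hl : l ≠ 0) (hlN : l ≤ N - 1) :
    ¬ Separates (symmetrization n (X i) l) (unitBall2N n N) (Pi.single i (r ^ (N + 1))) := by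
  refine not_separates_of_le (const_mem_unitBall2N (by linarith) hn) ?_
  have hn_pos : (0 : ℝ) < n := by rw [hn]; positivity
  rw [symmetrization_X_single i _ hl, symmetrization_X_const, abs_of_pos (by positivity),
    abs_of_pos (by positivity), div_le_iff₀ hn_pos, inv_pow, ← div_eq_inv_mul,
    le_div_iff₀ (by positivity), ← mul_pow, ← pow_add, ← pow_mul, hn]
  have hexp : (N + 1 + (N - 1)) * l ≤ 2 * N * (N - 1) := by
    rw [show N + 1 + (N - 1) = 2 * N by omega]
    exact Nat.mul_le_mul_left _ hlN
  exact pow_le_pow_right₀ hr.le hexp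

theorem separates_symmetrization_X (hN : N ≠ 0) :
    Separates (symmetrization n (X i) N) (unitBall2N n N) (Pi.single i (r ^ (N + 1))) := by
  have hsqrt : √n = r ^ (N * (N - 1)) := by
    rw [hn, show 2 * N * (N - 1) = N * (N - 1) * 2 by ring, pow_mul,
      Real.sqrt_sq (by positivity)]
  have hn_pos : (0 : ℝ) < n := by rw [hn]; positivity
  refine ⟨r ^ (N * (N - 1)) / n, ?_, fun w hw => ?_⟩
  · rw [symmetrization_X_single i _ hN, abs_of_pos (by positivity), ← pow_mul]
    refine (div_lt_div_iff_of_pos_right hn_pos).2 (pow_lt_pow_right₀ hr ?_)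
    calc N * (N - 1) < N * (N + 1) := Nat.mul_lt_mul_of_pos_left (by omega) (by omega)
      _ = (N + 1) * N := mul_comm _ _
  · rw [symmetrization_X, abs_div, Nat.abs_cast, ← hsqrt]
    gcongr
    exact abs_sum_pow_le_sqrt_of_mem_unitBall2N hw

end

/-- For every `N > 1` and `k ≥ 1`, with `n = 2k+1` and the `ℓ^{2N}` norm on
`ℝⁿ`, there exist `K` (the closed unit ball), a point `z ∉ K` and a polynomial `Q` such that
`Q` separates `z` from `K`, the `l`-th symmetrizations `P_l` (`1 ≤ l ≤ N-1`) do not separate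
`z` from `K`, and `P_N` separates `z` from `K`. -/
theorem statement2 (N k : ℕ) (hN : 1 < N) (hk : 1 ≤ k) :
    ∃ (Q : MvPolynomial (Fin (2 * k + 1)) ℝ) (z : Fin (2 * k + 1) → ℝ),
      z ∉ unitBall2N (2 * k + 1) N ∧
      (∃ c, c < |MvPolynomial.eval z Q| ∧
        ∀ w ∈ unitBall2N (2 * k + 1) N, |MvPolynomial.eval w Q| ≤ c) ∧
      (∀ l, 1 ≤ l → l ≤ N - 1 →
        ¬ ∃ c, c < |symmetrization (2 * k + 1) Q l z| ∧
          ∀ w ∈ unitBall2N (2 * k + 1) N, |symmetrization (2 * k + 1) Q l w| ≤ c) ∧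
      (∃ c, c < |symmetrization (2 * k + 1) Q N z| ∧
        ∀ w ∈ unitBall2N (2 * k + 1) N, |symmetrization (2 * k + 1) Q N w| ≤ c) := by
  obtain ⟨r, hr, hn⟩ := exists_one_lt_pow_eq (a := ((2 * k + 1 : ℕ) : ℝ))
    (by exact_mod_cast (by omega : 1 < 2 * k + 1)) (m := 2 * N * (N - 1))
    (Nat.mul_ne_zero (by omega) (by omega))
  have ht : 1 < r ^ (N + 1) := one_lt_pow₀ hr (by omega)
  exact ⟨X 0, Pi.single 0 (r ^ (N + 1)), single_notMem_unitBall2N 0 ht (by omega),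
    separates_X 0 (by omega) ht,
    fun l hl hlN => not_separates_symmetrization_X 0 hr hn (by omega) hlN,
    separates_symmetrization_X 0 hr hn (by omega)⟩
end

section
/- Let 1 ≤ p < ∞ and let z = (z_j)_{j≥1} be an element of ℓ^p (complex p-summable sequences) such that |z_{j₀}| > 1 for some index j₀. Then there exists a natural number k with k ≥ p such that the elementary symmetric-group-invariant polynomial F_k(x) = ∑_{j=1}^∞ x_j^k separates z from the closed unit ball of ℓ^p; that is, the series ∑_j z_j^k converges absolutely, |∑_{j=1}^∞ z_j^k| > 1, and |∑_{j=1}^∞ x_j^k| ≤ 1 for every x ∈ ℓ^p with ‖x‖_p ≤ 1. -/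
/-!
Let `M = max_j |z_j| > 1`; it is attained on a finite set `S` of indices because `z_j → 0`.
The points `(z_j / M)_{j ∈ S}` lie on a torus, which is compact, so some arbitrarily large power
`d` brings all of them within `1/4` of `1`; then `|∑_{j ∈ S} z_j^d| ≥ (3/4) M^d`. The remaining
coordinates satisfy `|z_j| < M`, and by dominated convergence they contribute `o(M^d)`.
On the unit ball, `|x_j| ≤ 1` gives `∑ |x_j|^k ≤ ∑ |x_j|^p = ‖x‖^p ≤ 1` for every `k ≥ p`.
-/

open scoped ENNReal
open Filter Topology

theorem frequently_forall_norm_pow_sub_one_lt {ι R : Type*} [Finite ι] [NormedDivisionRing R]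
    [ProperSpace R] {w : ι → R} (hw : ∀ i, ‖w i‖ = 1) {ε : ℝ} (hε : 0 < ε) :
    ∃ᶠ d in atTop, ∀ i, ‖w i ^ d - 1‖ < ε := by
  have : Fintype ι := Fintype.ofFinite ι
  set a : ℕ → ι → R := fun n i => w i ^ n
  have ha : ∀ n, a n ∈ Metric.closedBall 0 1 := fun n => by
    simp [a, pi_norm_le_iff_of_nonneg, norm_pow, hw]
  obtain ⟨_, _, φ, hφ, hlim⟩ := (isCompact_closedBall (0 : ι → R) 1).tendsto_subseq ha
  obtain ⟨K, hK⟩ := Metric.cauchySeq_iff'.1 hlim.cauchySeq ε hε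
  refine frequently_atTop.2 fun N => ⟨φ (N + K) - φ K, by have := hφ.add_le_nat N K; omega,
    fun i => ?_⟩
  have hle : φ K ≤ φ (N + K) := hφ.monotone (by omega)
  calc ‖w i ^ (φ (N + K) - φ K) - 1‖ = ‖w i ^ φ K * (w i ^ (φ (N + K) - φ K) - 1)‖ := by
        rw [norm_mul, norm_pow, hw, one_pow, one_mul]
    _ = ‖(a (φ (N + K)) - a (φ K)) i‖ := by
        rw [mul_sub, ← pow_add, Nat.add_sub_cancel' hle, mul_one]; rfl
    _ ≤ dist (a (φ (N + K))) (a (φ K)) := dist_eq_norm (a _) (a _) ▸ norm_le_pi_norm _ i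
    _ < ε := hK (N + K) (by omega)

theorem pow_le_rpow_of_le_one {a q : ℝ} {d : ℕ} (h0 : 0 ≤ a) (h1 : a ≤ 1) (hq : 0 ≤ q)
    (hqd : q ≤ d) : a ^ d ≤ a ^ q := by
  rw [← Real.rpow_natCast]
  exact Real.rpow_le_rpow_of_exponent_ge' h0 h1 hq hqd

theorem tendsto_tsum_pow_atTop_zero {β : Type*} {a : β → ℝ} {q : ℝ} (h0 : ∀ j, 0 ≤ a j)
    (h1 : ∀ j, a j < 1) (hq : 0 ≤ q) (hs : Summable fun j => a j ^ q) :
    Tendsto (fun d : ℕ => ∑' j, a j ^ d) atTop (𝓝 0) := by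
  have hbound : ∀ᶠ d : ℕ in atTop, ∀ j, ‖a j ^ d‖ ≤ a j ^ q := by
    filter_upwards [eventually_ge_atTop ⌈q⌉₊] with d hd j
    rw [Real.norm_of_nonneg (pow_nonneg (h0 j) d)]
    exact pow_le_rpow_of_le_one (h0 j) (h1 j).le hq (Nat.ceil_le.1 hd)
  simpa using tendsto_tsum_of_dominated_convergence (f := fun d j => a j ^ d) hs
    (fun j => tendsto_pow_atTop_nhds_zero_of_lt_one (h0 j) (h1 j)) hbound

theorem finite_setOf_le_norm_of_summable_rpow {β E : Type*} [SeminormedAddCommGroup E]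
    {f : β → E} {q : ℝ} (hq : 0 < q) (hs : Summable fun j => ‖f j‖ ^ q) {c : ℝ} (hc : 0 < c) :
    {j | c ≤ ‖f j‖}.Finite := by
  have hsmall := hs.tendsto_cofinite_zero.eventually (gt_mem_nhds (Real.rpow_pos_of_pos hc q))
  refine (eventually_cofinite.1 hsmall).subset fun j hj => ?_
  exact not_lt.2 (Real.rpow_le_rpow hc.le hj hq.le)

theorem mul_card_le_norm_sum {ι 𝕜 : Type*} [RCLike 𝕜] (s : Finset ι) {v : ι → 𝕜} {ε : ℝ}
    (hv : ∀ i ∈ s, ‖v i - 1‖ ≤ ε) : (1 - ε) * s.card ≤ ‖∑ i ∈ s, v i‖ := by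
  have herr : ‖∑ i ∈ s, (1 - v i)‖ ≤ s.card * ε := by
    calc ‖∑ i ∈ s, (1 - v i)‖ ≤ ∑ i ∈ s, ‖1 - v i‖ := norm_sum_le _ _
      _ ≤ ∑ _i ∈ s, ε := Finset.sum_le_sum fun i hi => norm_sub_rev (v i) 1 ▸ hv i hi
      _ = s.card * ε := by rw [Finset.sum_const, nsmul_eq_mul]
  have := norm_sub_norm_le (∑ _i ∈ s, (1 : 𝕜)) (∑ i ∈ s, v i)
  rw [← Finset.sum_sub_distrib, Finset.sum_const, nsmul_one, RCLike.norm_natCast] at this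
  linarith

theorem frequently_half_le_norm_tsum_pow {β 𝕜 : Type*} [RCLike 𝕜] {u : β → 𝕜} {q : ℝ}
    (hq : 0 < q) (hu : ∀ j, ‖u j‖ ≤ 1) (hs : Summable fun j => ‖u j‖ ^ q) {j₁ : β}
    (hj₁ : ‖u j₁‖ = 1) : ∃ᶠ d in atTop, 1 / 2 ≤ ‖∑' j, u j ^ d‖ := by
  set S := (finite_setOf_le_norm_of_summable_rpow hq hs one_pos).toFinset
  have hS : ∀ j, j ∈ S ↔ ‖u j‖ = 1 := fun j => by
    simpa [S] using ⟨fun h => le_antisymm (hu j) h, fun h => h.ge⟩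
  have hSc : ∀ j : ↥(↑S : Set β)ᶜ, ‖u j‖ < 1 := fun j =>
    (hu j).lt_of_ne fun h => j.2 ((hS j).2 h)
  have hcard : 1 ≤ (S.card : ℝ) := by
    exact_mod_cast Finset.card_pos.2 ⟨j₁, (hS j₁).2 hj₁⟩
  have hhead : ∃ᶠ d in atTop, ∀ j : S, ‖u j ^ d - 1‖ < 1 / 4 :=
    frequently_forall_norm_pow_sub_one_lt (w := fun j : S => u j) (fun j => (hS j).1 j.2)
      (by norm_num)
  have htail : ∀ᶠ d in atTop, ∑' j : ↥(↑S : Set β)ᶜ, ‖u j‖ ^ d ≤ 1 / 4 :=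
    (tendsto_tsum_pow_atTop_zero (fun _ => norm_nonneg _) hSc hq.le
      (hs.subtype _)).eventually_le_const (by norm_num)
  refine (hhead.and_eventually (htail.and (eventually_ge_atTop ⌈q⌉₊))).mono ?_
  rintro d ⟨hnear, hsmall, hqd⟩
  have hbound : ∀ j, ‖u j ^ d‖ ≤ ‖u j‖ ^ q := fun j => by
    rw [norm_pow]
    exact pow_le_rpow_of_le_one (norm_nonneg _) (hu j) hq.le (Nat.ceil_le.1 hqd)
  have hsum : Summable fun j => ‖u j ^ d‖ := hs.of_nonneg_of_le (fun _ => norm_nonneg _) hbound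
  have hhead_ge : 3 / 4 ≤ ‖∑ j ∈ S, u j ^ d‖ := by
    have := mul_card_le_norm_sum S (v := fun j => u j ^ d) (ε := 1 / 4)
      fun j hj => (hnear ⟨j, hj⟩).le
    linarith
  have htail_le : ‖∑' j : ↥(↑S : Set β)ᶜ, u j ^ d‖ ≤ 1 / 4 :=
    calc ‖∑' j : ↥(↑S : Set β)ᶜ, u j ^ d‖ ≤ ∑' j : ↥(↑S : Set β)ᶜ, ‖u j ^ d‖ :=
          norm_tsum_le_tsum_norm (hsum.subtype _)
      _ = ∑' j : ↥(↑S : Set β)ᶜ, ‖u j‖ ^ d := by simp only [norm_pow]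
      _ ≤ 1 / 4 := hsmall
  rw [← (Summable.of_norm hsum).sum_add_tsum_compl (s := S)]
  linarith [norm_sub_le_norm_add (∑ j ∈ S, u j ^ d) (∑' j : ↥(↑S : Set β)ᶜ, u j ^ d)]

theorem frequently_one_lt_norm_tsum_pow {β 𝕜 : Type*} [RCLike 𝕜] {z : β → 𝕜} {q : ℝ}
    (hq : 0 < q) (hs : Summable fun j => ‖z j‖ ^ q) {j₀ : β} (hz : 1 < ‖z j₀‖) :
    ∃ᶠ d in atTop, 1 < ‖∑' j, z j ^ d‖ := by
  obtain ⟨jm, hjm, hmax⟩ := Set.exists_max_image _ (fun j => ‖z j‖)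
    (finite_setOf_le_norm_of_summable_rpow hq hs (one_pos.trans hz))
    ⟨j₀, show ‖z j₀‖ ≤ ‖z j₀‖ from le_rfl⟩
  set M := ‖z jm‖
  have hM : 1 < M := hz.trans_le hjm
  have hle : ∀ j, ‖z j‖ ≤ M := fun j =>
    (le_total ‖z j₀‖ ‖z j‖).elim (hmax j) fun h => h.trans hjm
  have hM0 : (M : 𝕜) ≠ 0 := RCLike.ofReal_ne_zero.2 (by positivity)
  set u := fun j => z j / (M : 𝕜)
  have hnorm_u : ∀ j, ‖u j‖ = ‖z j‖ / M := fun j => by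
    rw [norm_div, RCLike.norm_ofReal, abs_of_pos (by positivity)]
  have hu : ∀ j, ‖u j‖ ≤ 1 := fun j => by
    rw [hnorm_u, div_le_one (by positivity)]; exact hle j
  have hus : Summable fun j => ‖u j‖ ^ q := by
    simp_rw [hnorm_u, Real.div_rpow (norm_nonneg _) (by positivity : (0 : ℝ) ≤ M)]
    exact hs.div_const _
  have hum : ‖u jm‖ = 1 := by rw [hnorm_u, div_self (by positivity)]
  refine ((frequently_half_le_norm_tsum_pow hq hu hus hum).and_eventually
    ((tendsto_pow_atTop_atTop_of_one_lt hM).eventually_gt_atTop 2)).mono ?_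
  rintro d ⟨hhalf, hMd⟩
  have hz_eq : ∀ j, z j ^ d = (M : 𝕜) ^ d * u j ^ d := fun j => by
    rw [← mul_pow, mul_div_cancel₀ _ hM0]
  calc 1 < M ^ d * (1 / 2) := by linarith
    _ ≤ M ^ d * ‖∑' j, u j ^ d‖ := by gcongr
    _ = ‖∑' j, z j ^ d‖ := by
        rw [tsum_congr hz_eq, tsum_mul_left, norm_mul, norm_pow, RCLike.norm_ofReal,
          abs_of_pos (by positivity)]

theorem Memℓp.summable_norm_pow {β 𝕜 : Type*} [NormedDivisionRing 𝕜] {f : β → 𝕜} {k : ℕ}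
    (hf : Memℓp f k) (hk : k ≠ 0) : Summable fun j => ‖f j ^ k‖ := by
  simpa [norm_pow, Real.rpow_natCast] using hf.summable (by simpa using Nat.pos_of_ne_zero hk)

theorem lp.norm_tsum_pow_le_one {β 𝕜 : Type*} [RCLike 𝕜] {p : ℝ≥0∞} [Fact (1 ≤ p)]
    (hp : p ≠ ∞) {x : lp (fun _ : β => 𝕜) p} (hx : ‖x‖ ≤ 1) {k : ℕ} (hk : p ≤ k) :
    ‖∑' j, x j ^ k‖ ≤ 1 := by
  have hp0 : p ≠ 0 := (zero_lt_one.trans_le Fact.out).ne'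
  have hq : 0 < p.toReal := ENNReal.toReal_pos hp0 hp
  have hqk : p.toReal ≤ k := by simpa using ENNReal.toReal_mono (ENNReal.natCast_ne_top k) hk
  have hbound : ∀ j, ‖x j ^ k‖ ≤ ‖x j‖ ^ p.toReal := fun j => by
    rw [norm_pow]
    exact pow_le_rpow_of_le_one (norm_nonneg _) ((lp.norm_apply_le_norm hp0 x j).trans hx) hq.le hqk
  have hsum := (x.2.summable hq).of_nonneg_of_le (fun _ => norm_nonneg _) hbound
  calc ‖∑' j, x j ^ k‖ ≤ ∑' j, ‖x j ^ k‖ := norm_tsum_le_tsum_norm hsum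
    _ ≤ ∑' j, ‖x j‖ ^ p.toReal := hsum.tsum_le_tsum hbound (x.2.summable hq)
    _ = ‖x‖ ^ p.toReal := (lp.norm_rpow_eq_tsum hq x).symm
    _ ≤ 1 := Real.rpow_le_one (norm_nonneg _) hx hq.le

/-- Let `1 ≤ p < ∞` and `z ∈ ℓ^p` (complex) with `|z_{j₀}| > 1` for some
index `j₀`. Then there is a natural number `k ≥ p` such that the elementary
symmetric-group-invariant polynomial `F_k(x) = ∑_j x_j^k` separates `z` from the closed unit
ball of `ℓ^p`: the series `∑_j z_j^k` converges absolutely, `|∑_j z_j^k| > 1`, and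
`|∑_j x_j^k| ≤ 1` (the series again converging absolutely) for every `x` with `‖x‖ ≤ 1`. -/
theorem statement11 (p : ℝ≥0∞) [Fact (1 ≤ p)] (hp : p ≠ ∞)
    (z : lp (fun _ : ℕ => ℂ) p) (j₀ : ℕ) (hz : 1 < ‖z j₀‖) :
    ∃ k : ℕ, p ≤ (k : ℝ≥0∞) ∧
      Summable (fun j : ℕ => ‖(z j) ^ k‖) ∧
      1 < ‖∑' j : ℕ, (z j) ^ k‖ ∧
      ∀ x : lp (fun _ : ℕ => ℂ) p, ‖x‖ ≤ 1 →
        Summable (fun j : ℕ => ‖(x j) ^ k‖) ∧ ‖∑' j : ℕ, (x j) ^ k‖ ≤ 1 := by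
  have hq : 0 < p.toReal := ENNReal.toReal_pos (zero_lt_one.trans_le Fact.out).ne' hp
  obtain ⟨k, hk, hqk⟩ :=
    ((frequently_one_lt_norm_tsum_pow hq ((lp.memℓp z).summable hq) hz).and_eventually
      (eventually_ge_atTop ⌈p.toReal⌉₊)).exists
  have hpk : p ≤ k := by
    rw [← ENNReal.ofReal_toReal hp, ← ENNReal.ofReal_natCast]
    exact ENNReal.ofReal_le_ofReal (Nat.ceil_le.1 hqk)
  have hk0 : k ≠ 0 := by
    rintro rfl
    exact absurd ((Fact.out : 1 ≤ p).trans hpk) (by simp)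
  refine ⟨k, hpk, ((lp.memℓp z).of_exponent_ge hpk).summable_norm_pow hk0, hk, fun x hx =>
    ⟨((lp.memℓp x).of_exponent_ge hpk).summable_norm_pow hk0, lp.norm_tsum_pow_le_one hp hx hpk⟩⟩
end

section
/- Let m ≥ 1 be a natural number and let p be a real number with m < p < m+1. Define z = (z_n)_{n≥1} by z_n = 2^{-n/(m+1)}. Then z ∈ ℓ^p with ‖z‖_p = (2^{p/(m+1)} − 1)^{-1/p} > 1, yet for every natural number k ≥ m+1 one has 0 < ∑_{n=1}^∞ z_n^k = (2^{k/(m+1)} − 1)^{-1} ≤ 1. In particular, z lies outside the closed unit ball of ℓ^p but cannot be separated from the closed unit ball by any elementary invariant polynomial F_k(x) = ∑_n x_n^k with k ≥ m+1. -/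
lemma geom_aux (a : ℝ) (ha : 0 < a) :
    Summable (fun j : ℕ => ((2:ℝ) ^ (-a)) ^ (j+1)) ∧
    (∑' j : ℕ, ((2:ℝ) ^ (-a)) ^ (j+1)) = ((2:ℝ) ^ a - 1)⁻¹ := by
  set r : ℝ := (2:ℝ) ^ (-a) with hr
  have h2 : (1:ℝ) < (2:ℝ) ^ a := Real.one_lt_rpow_iff_of_pos (by norm_num) |>.2 (Or.inl ⟨by norm_num, ha⟩)
  have hr0 : 0 < r := Real.rpow_pos_of_pos (by norm_num) _
  have hr1 : r < 1 := Real.rpow_lt_one_of_one_lt_of_neg (by norm_num) (by linarith)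
  have hsum : Summable (fun j : ℕ => r ^ j) := summable_geometric_of_lt_one hr0.le hr1
  have hsum' : Summable (fun j : ℕ => r ^ (j+1)) := by
    simpa [pow_succ] using hsum.mul_right r
  refine ⟨hsum', ?_⟩
  have : (∑' j : ℕ, r ^ (j+1)) = (∑' j : ℕ, r ^ j) * r := by
    simpa [pow_succ] using tsum_mul_right (f := fun j : ℕ => r ^ j) (a := r)
  rw [this, tsum_geometric_of_lt_one hr0.le hr1]
  have hrinv : r = ((2:ℝ) ^ a)⁻¹ := by rw [hr, Real.rpow_neg (by norm_num)]
  rw [hrinv]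
  have h2ne : (2:ℝ) ^ a ≠ 0 := by positivity
  rw [← mul_inv]
  congr 1
  field_simp

/-- Let `m ≥ 1` and `m < p < m + 1`. The sequence `z_n = 2^{-n/(m+1)}`
(`n ≥ 1`, here `zseq j = 2^{-(j+1)/(m+1)}` with `0`-based index) belongs to `ℓ^p` with
`‖z‖_p = (2^{p/(m+1)} - 1)^{-1/p} > 1`, yet for every natural `k ≥ m + 1` one has
`0 < ∑_n z_n^k = (2^{k/(m+1)} - 1)⁻¹ ≤ 1`; hence `z` lies outside the closed unit ball of
`ℓ^p` but is not separated from it by any elementary invariant polynomial `F_k`, `k ≥ m+1`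
(note `sup_{‖x‖_p ≤ 1} |F_k(x)| ≥ |F_k(e₁)| = 1`). -/
theorem statement12 (m : ℕ) (hm : 1 ≤ m) (p : ℝ) (hp₁ : (m : ℝ) < p) (hp₂ : p < m + 1)
    (zseq : ℕ → ℝ) (hzseq : ∀ j : ℕ, zseq j = (2 : ℝ) ^ (-(((j : ℝ) + 1) / ((m : ℝ) + 1)))) :
    Summable (fun j : ℕ => |zseq j| ^ p) ∧
    (∑' j : ℕ, |zseq j| ^ p) ^ (1 / p) = ((2 : ℝ) ^ (p / ((m : ℝ) + 1)) - 1) ^ (-(1 / p)) ∧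
    1 < (∑' j : ℕ, |zseq j| ^ p) ^ (1 / p) ∧
    ∀ k : ℕ, m + 1 ≤ k →
      Summable (fun j : ℕ => zseq j ^ k) ∧
      0 < ∑' j : ℕ, zseq j ^ k ∧
      (∑' j : ℕ, zseq j ^ k) = ((2 : ℝ) ^ ((k : ℝ) / ((m : ℝ) + 1)) - 1)⁻¹ ∧
      (∑' j : ℕ, zseq j ^ k) ≤ 1 := by
  have hm1 : (0:ℝ) < (m:ℝ) + 1 := by positivity
  have hp0 : 0 < p := lt_of_le_of_lt (Nat.cast_nonneg m) hp₁
  have hz : ∀ j : ℕ, 0 < zseq j := fun j => by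
    rw [hzseq j]; exact Real.rpow_pos_of_pos (by norm_num) _
  -- |zseq j| ^ p as geometric
  have hkeyp : ∀ j : ℕ, |zseq j| ^ p = ((2:ℝ) ^ (-(p/((m:ℝ)+1)))) ^ (j+1) := by
    intro j
    rw [abs_of_pos (hz j), hzseq j, ← Real.rpow_natCast ((2:ℝ) ^ (-(p/((m:ℝ)+1)))) (j+1),
      ← Real.rpow_mul (by norm_num), ← Real.rpow_mul (by norm_num)]
    congr 1
    push_cast
    ring
  have hap : 0 < p / ((m:ℝ)+1) := by positivity
  obtain ⟨hS, hT⟩ := geom_aux (p/((m:ℝ)+1)) hap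
  have hsum1 : Summable (fun j : ℕ => |zseq j| ^ p) := by
    simpa only [hkeyp] using hS
  have hT1 : (∑' j : ℕ, |zseq j| ^ p) = ((2:ℝ) ^ (p/((m:ℝ)+1)) - 1)⁻¹ := by
    simpa only [hkeyp] using hT
  have h2gt1 : (1:ℝ) < (2:ℝ) ^ (p/((m:ℝ)+1)) :=
    Real.one_lt_rpow_iff_of_pos (by norm_num) |>.2 (Or.inl ⟨by norm_num, hap⟩)
  have hden : 0 < (2:ℝ) ^ (p/((m:ℝ)+1)) - 1 := by linarith
  refine ⟨hsum1, ?_, ?_, ?_⟩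
  · rw [hT1, Real.inv_rpow hden.le, ← Real.rpow_neg hden.le]
  · rw [hT1]
    apply Real.one_lt_rpow_iff_of_pos (by positivity) |>.2
    left
    constructor
    · rw [one_lt_inv_iff₀]
      have hlt2 : (2:ℝ) ^ (p/((m:ℝ)+1)) < 2 := by
        have : p / ((m:ℝ)+1) < 1 := (div_lt_one hm1).2 hp₂
        calc (2:ℝ) ^ (p/((m:ℝ)+1)) < (2:ℝ) ^ (1:ℝ) :=
              Real.rpow_lt_rpow_left_iff (by norm_num) |>.2 this
          _ = 2 := Real.rpow_one 2
      exact ⟨hden, by linarith⟩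
    · positivity
  · intro k hk
    have hkeyk : ∀ j : ℕ, zseq j ^ k = ((2:ℝ) ^ (-((k:ℝ)/((m:ℝ)+1)))) ^ (j+1) := by
      intro j
      rw [hzseq j, ← Real.rpow_natCast ((2:ℝ) ^ (-(((j:ℝ)+1)/((m:ℝ)+1)))) k,
        ← Real.rpow_natCast ((2:ℝ) ^ (-((k:ℝ)/((m:ℝ)+1)))) (j+1),
        ← Real.rpow_mul (by norm_num), ← Real.rpow_mul (by norm_num)]
      congr 1
      push_cast
      ring
    have hak : 0 < (k:ℝ) / ((m:ℝ)+1) := by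
      have : (0:ℝ) < (k:ℝ) := by exact_mod_cast Nat.lt_of_lt_of_le (Nat.succ_le_succ (Nat.zero_le m)) hk
      positivity
    obtain ⟨hSk, hTk⟩ := geom_aux ((k:ℝ)/((m:ℝ)+1)) hak
    have hsumk : Summable (fun j : ℕ => zseq j ^ k) := by simpa only [hkeyk] using hSk
    have hTk' : (∑' j : ℕ, zseq j ^ k) = ((2:ℝ) ^ ((k:ℝ)/((m:ℝ)+1)) - 1)⁻¹ := by
      simpa only [hkeyk] using hTk
    have h2k : (2:ℝ) ≤ (2:ℝ) ^ ((k:ℝ)/((m:ℝ)+1)) := by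
      have h1le : (1:ℝ) ≤ (k:ℝ)/((m:ℝ)+1) := by
        rw [le_div_iff₀ hm1]
        have : ((m:ℝ)+1) ≤ (k:ℝ) := by exact_mod_cast hk
        linarith
      calc (2:ℝ) = (2:ℝ) ^ (1:ℝ) := (Real.rpow_one 2).symm
        _ ≤ (2:ℝ) ^ ((k:ℝ)/((m:ℝ)+1)) := Real.rpow_le_rpow_left_iff (by norm_num) |>.2 h1le
    have hdenk : (1:ℝ) ≤ (2:ℝ) ^ ((k:ℝ)/((m:ℝ)+1)) - 1 := by linarith
    refine ⟨hsumk, ?_, hTk', ?_⟩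
    · rw [hTk']; positivity
    · rw [hTk']; exact inv_le_one_of_one_le₀ hdenk
end
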